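/- arXiv:2101.11053 — 5 statements merged into one kernel-verified Lean document; each statement's English description precedes it below -/
import Mathlib

section
/- Let g(t) = (⌈t/(m·E)⌉ + 1)·(P − E) + t/m for t > 0 and let sbf be the worst-case service bound function of an m-in-parallel reservation system with budget E and period P (as in the previous context). Then for every W > 0, g(W) = min { t > 0 : sbf(t) ≥ W }. -/
/-- Worst-case service bound function of an `m`-in-parallel reservation system. -/
noncomputable def sbf (m : ℕ) (E P t : ℝ) : ℝ :=
  if t ≤ 2 * (P - E) then 0
  else (m : ℝ) * ((⌊(t - 2 * (P - E)) / P⌋ : ℝ) * E +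
    min ((t - 2 * (P - E)) - (⌊(t - 2 * (P - E)) / P⌋ : ℝ) * P) E)

/-- `g(t) = (⌈t/(m·E)⌉ + 1)·(P − E) + t/m`. -/
noncomputable def g (m : ℕ) (E P t : ℝ) : ℝ :=
  ((⌈t / ((m : ℝ) * E)⌉ : ℝ) + 1) * (P - E) + t / (m : ℝ)

set_option maxHeartbeats 1000000 in
/-- For every `W > 0`, `g(W)` is the minimum of `{t > 0 : sbf(t) ≥ W}`. -/
theorem g_eq_min_sbf_ge (m : ℕ) (hm : 1 ≤ m) (E P : ℝ) (hE : 0 < E) (hEP : E ≤ P) :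
    ∀ W : ℝ, 0 < W → IsLeast {t : ℝ | 0 < t ∧ W ≤ sbf m E P t} (g m E P W) := by
  intro W hW
  have hm1 : (1 : ℝ) ≤ (m : ℝ) := by exact_mod_cast hm
  have hm0 : (0 : ℝ) < (m : ℝ) := by linarith
  have hP : (0 : ℝ) < P := lt_of_lt_of_le hE hEP
  have hPE : (0 : ℝ) ≤ P - E := by linarith
  have hmE : (0 : ℝ) < (m : ℝ) * E := by positivity
  set k : ℤ := ⌈W / ((m : ℝ) * E)⌉ with hkdef
  have hk1 : 1 ≤ k := by
    have : 0 < k := Int.ceil_pos.mpr (div_pos hW hmE)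
    omega
  have hk1' : (1 : ℝ) ≤ (k : ℝ) := by exact_mod_cast hk1
  have hWle : W ≤ (k : ℝ) * ((m : ℝ) * E) := by
    have h := Int.le_ceil (W / ((m : ℝ) * E))
    rw [← hkdef] at h
    calc W = W / ((m : ℝ) * E) * ((m : ℝ) * E) := by field_simp
      _ ≤ (k : ℝ) * ((m : ℝ) * E) := mul_le_mul_of_nonneg_right h (le_of_lt hmE)
  have hWgt : ((k : ℝ) - 1) * ((m : ℝ) * E) < W := by
    have h := Int.ceil_lt_add_one (W / ((m : ℝ) * E))
    rw [← hkdef] at h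
    have h' : (k : ℝ) - 1 < W / ((m : ℝ) * E) := by linarith
    calc ((k : ℝ) - 1) * ((m : ℝ) * E) < W / ((m : ℝ) * E) * ((m : ℝ) * E) :=
          mul_lt_mul_of_pos_right h' hmE
      _ = W := by field_simp
  have hgdef : g m E P W = ((k : ℝ) + 1) * (P - E) + W / (m : ℝ) := by
    rw [g, ← hkdef]
  have hWm : 0 < W / (m : ℝ) := div_pos hW hm0
  -- divide-out versions
  have hWmle : W / (m : ℝ) ≤ (k : ℝ) * E := by
    rw [div_le_iff₀ hm0]; nlinarith [hWle]
  have hWmgt : ((k : ℝ) - 1) * E < W / (m : ℝ) := by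
    rw [lt_div_iff₀ hm0]; nlinarith [hWgt]
  constructor
  · -- membership
    rw [Set.mem_setOf_eq, hgdef]
    have hx0 : ((k : ℝ) + 1) * (P - E) + W / (m : ℝ) - 2 * (P - E)
        = ((k : ℝ) - 1) * (P - E) + W / (m : ℝ) := by ring
    have hx0pos : (0 : ℝ) < ((k : ℝ) - 1) * (P - E) + W / (m : ℝ) := by
      nlinarith
    have ht2 : ¬ ((k : ℝ) + 1) * (P - E) + W / (m : ℝ) ≤ 2 * (P - E) := by
      push_neg; nlinarith
    constructor
    · nlinarith
    · rw [sbf, if_neg ht2, hx0]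
      set x : ℝ := ((k : ℝ) - 1) * (P - E) + W / (m : ℝ) with hxdef
      have hxlow : ((k : ℝ) - 1) * P < x := by
        rw [hxdef]; nlinarith
      have hxhigh : x ≤ (k : ℝ) * P := by
        rw [hxdef]; nlinarith
      set j : ℤ := ⌊x / P⌋ with hjdef
      have hjlow : k - 1 ≤ j := by
        rw [hjdef]
        apply Int.le_floor.mpr
        push_cast
        rw [le_div_iff₀ hP]
        linarith
      have hjhigh : j ≤ k := by
        rw [hjdef]
        have : x / P ≤ (k : ℝ) := by rw [div_le_iff₀ hP]; linarith
        calc ⌊x / P⌋ ≤ ⌊(k : ℝ)⌋ := Int.floor_le_floor this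
          _ = k := Int.floor_intCast k
      have hcases : j = k - 1 ∨ j = k := by omega
      rcases hcases with hj | hj
      · -- j = k - 1 : sbf value equals W
        have hj' : (j : ℝ) = (k : ℝ) - 1 := by rw [hj]; push_cast; ring
        rw [hj']
        have hmin : min (x - ((k : ℝ) - 1) * P) E = x - ((k : ℝ) - 1) * P := by
          apply min_eq_left
          rw [hxdef]; nlinarith
        rw [hmin]
        have : (m : ℝ) * (((k : ℝ) - 1) * E + (x - ((k : ℝ) - 1) * P)) = W := by
          rw [hxdef]; field_simp; ring
        linarith
      · -- j = k : x = k*P exactly, min term is ≥ 0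
        have hj' : (j : ℝ) = (k : ℝ) := by exact_mod_cast hj
        rw [hj']
        have hge : (k : ℝ) * P ≤ x := by
          have h := Int.floor_le (x / P)
          rw [← hjdef, hj'] at h
          calc (k : ℝ) * P ≤ (x / P) * P := mul_le_mul_of_nonneg_right h hP.le
            _ = x := by field_simp
        have hmin : 0 ≤ min (x - (k : ℝ) * P) E := le_min (by linarith) (le_of_lt hE)
        calc W ≤ (k : ℝ) * ((m : ℝ) * E) := hWle
          _ = (m : ℝ) * ((k : ℝ) * E + 0) := by ring
          _ ≤ (m : ℝ) * ((k : ℝ) * E + min (x - (k : ℝ) * P) E) := by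
              apply mul_le_mul_of_nonneg_left _ hm0.le
              linarith
  · -- lower bound
    intro t ht
    obtain ⟨htpos, htW⟩ := ht
    by_cases ht2 : t ≤ 2 * (P - E)
    · exfalso
      rw [sbf, if_pos ht2] at htW
      linarith
    · rw [sbf, if_neg ht2] at htW
      push_neg at ht2
      set x : ℝ := t - 2 * (P - E) with hxdef
      set j : ℤ := ⌊x / P⌋ with hjdef
      have hjP : (j : ℝ) * P ≤ x := by
        have h := Int.floor_le (x / P)
        rw [← hjdef] at h
        calc (j : ℝ) * P ≤ (x / P) * P := mul_le_mul_of_nonneg_right h (le_of_lt hP)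
          _ = x := by field_simp
      have hminE : min (x - (j : ℝ) * P) E ≤ E := min_le_right _ _
      have hminx : min (x - (j : ℝ) * P) E ≤ x - (j : ℝ) * P := min_le_left _ _
      -- (a) k ≤ j + 1
      have hWj : W ≤ ((j : ℝ) + 1) * ((m : ℝ) * E) := by nlinarith [htW]
      have hkj : k ≤ j + 1 := by
        rw [hkdef]
        apply Int.ceil_le.mpr
        push_cast
        rw [div_le_iff₀ hmE]
        linarith
      have hkj' : (k : ℝ) - 1 ≤ (j : ℝ) := by
        have : (k : ℝ) ≤ (j : ℝ) + 1 := by exact_mod_cast hkj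
        linarith
      -- (b) x ≥ j*(P-E) + W/m
      have hxb : (j : ℝ) * (P - E) + W / (m : ℝ) ≤ x := by
        have h1 : W ≤ (m : ℝ) * ((j : ℝ) * E + (x - (j : ℝ) * P)) := by nlinarith [htW]
        have h2 : W / (m : ℝ) ≤ (j : ℝ) * E + (x - (j : ℝ) * P) := by
          rw [div_le_iff₀ hm0]; nlinarith
        linarith
      rw [hgdef]
      have : ((k : ℝ) - 1) * (P - E) + W / (m : ℝ) ≤ x := by nlinarith
      rw [hxdef] at this
      linarith
end

section
/- Fix P > 0, D > 0, m ∈ ℕ_{≥1}, and a nonnegative random variable Y (with finitely many values). Define Φ(E) = P( (⌈Y/E⌉ + 1)·(P − E) + Y > D ) for E ∈ (0, P]. Then Φ is monotonically non-increasing: for 0 < E ≤ E + δ ≤ P, Φ(E + δ) ≤ Φ(E). -/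
open MeasureTheory

/-- The deadline-miss probability `Φ(E) = P((⌈Y/E⌉ + 1)·(P − E) + Y > D)` is
monotonically non-increasing in the reservation budget `E` on `(0, P]`. -/
theorem miss_probability_antitone_in_budget {Ω : Type*} [MeasurableSpace Ω]
    (μ : Measure Ω) [IsProbabilityMeasure μ] (Y : Ω → ℝ) (hY : Measurable Y)
    (hYpos : ∀ ω, 0 ≤ Y ω) (P D : ℝ) (hP : 0 < P) (hD : 0 < D)
    (E δ : ℝ) (hE : 0 < E) (hδ : 0 ≤ δ) (hEδP : E + δ ≤ P) :
    μ {ω | D < ((⌈Y ω / (E + δ)⌉ : ℝ) + 1) * (P - (E + δ)) + Y ω} ≤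
    μ {ω | D < ((⌈Y ω / E⌉ : ℝ) + 1) * (P - E) + Y ω} := by
  apply measure_mono
  intro ω hω
  simp only [Set.mem_setOf_eq] at hω ⊢
  have hEδ : 0 < E + δ := by linarith
  have hdiv : Y ω / (E + δ) ≤ Y ω / E :=
    div_le_div_of_nonneg_left (hYpos ω) hE (by linarith)
  have hceil : (⌈Y ω / (E + δ)⌉ : ℝ) ≤ (⌈Y ω / E⌉ : ℝ) := by
    exact_mod_cast Int.ceil_le_ceil hdiv
  have hceilpos : (0 : ℝ) ≤ (⌈Y ω / (E + δ)⌉ : ℝ) := by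
    have : (0 : ℤ) ≤ ⌈Y ω / (E + δ)⌉ :=
      Int.ceil_nonneg (div_nonneg (hYpos ω) hEδ.le)
    exact_mod_cast this
  have hprod : ((⌈Y ω / (E + δ)⌉ : ℝ) + 1) * (P - (E + δ)) ≤
      ((⌈Y ω / E⌉ : ℝ) + 1) * (P - E) :=
    mul_le_mul (by linarith) (by linarith) (by linarith) (by linarith)
  linarith
end

section
/- For any E with 0 < E ≤ P, any Y ≥ 0 and δ ≥ 0 with E + δ ≤ P: (⌈Y/(E+δ)⌉ + 1)·(P − (E+δ)) + Y ≤ (⌈Y/E⌉ + 1)·(P − E) + Y. -/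
/-- Pointwise monotonicity of the response-time bound in the budget:
for `0 < E ≤ E + δ ≤ P` and `Y ≥ 0`,
`(⌈Y/(E+δ)⌉ + 1)·(P − (E+δ)) + Y ≤ (⌈Y/E⌉ + 1)·(P − E) + Y`. -/
theorem response_bound_pointwise_antitone (P Y E δ : ℝ) (hP : 0 < P) (hY : 0 ≤ Y)
    (hE : 0 < E) (hδ : 0 ≤ δ) (hEδP : E + δ ≤ P) :
    ((⌈Y / (E + δ)⌉ : ℝ) + 1) * (P - (E + δ)) + Y ≤
    ((⌈Y / E⌉ : ℝ) + 1) * (P - E) + Y := by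
  have hEδ : 0 < E + δ := by linarith
  have hceil : ⌈Y / (E + δ)⌉ ≤ ⌈Y / E⌉ :=
    Int.ceil_le_ceil (div_le_div_of_nonneg_left hY hE (by linarith))
  have h0 : (0:ℤ) ≤ ⌈Y / (E + δ)⌉ := Int.ceil_nonneg (div_nonneg hY hEδ.le)
  have h1 : (0:ℝ) ≤ (⌈Y / (E + δ)⌉ : ℝ) + 1 := by
    have : (0:ℝ) ≤ (⌈Y / (E + δ)⌉ : ℝ) := by exact_mod_cast h0
    linarith
  have hc : ((⌈Y / (E + δ)⌉ : ℝ) + 1) ≤ ((⌈Y / E⌉ : ℝ) + 1) := by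
    have : ((⌈Y / (E + δ)⌉ : ℝ)) ≤ ((⌈Y / E⌉ : ℝ)) := by exact_mod_cast hceil
    linarith
  have := mul_le_mul hc (by linarith : P - (E + δ) ≤ P - E) (by linarith) (by linarith)
  linarith
end

section
/- Suppose work(a, c) = work(a, b) + work(b, c) for a ≤ b ≤ c (interval additivity), work(f_{q−1}, s_q) = serv(f_{q−1}, s_q), and work(s_q, f_q) ≥ serv(s_q, f_q) − (m−1)·len(v_q) for every consecutive pair in the envelope with release point r ≤ s_1 ≤ f_1 ≤ … ≤ s_p ≤ f_p, together with work(r, s_1) = serv(r, s_1) and serv interval-additive. Then work(r, f_p) ≥ serv(r, f_p) − (m−1)·Σ_{q=1}^{p} len(v_q). -/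
/-- Abstract envelope lemma: with interval-additive `work` and `serv`, equality
on the gap intervals and the inequality `work ≥ serv − (m−1)·len q` on each
envelope subjob interval, the total work from release `r` to the last finishing
time `f p` satisfies `work(r, f p) ≥ serv(r, f p) − (m−1)·Σ len q`. -/
theorem abstract_envelope_lemma (work serv : ℝ → ℝ → ℝ) (m : ℝ) (hm : 1 ≤ m)
    (len : ℕ → ℝ) (hlen : ∀ q, 0 < len q)
    (r : ℝ) (p : ℕ) (hp : 1 ≤ p) (s f : ℕ → ℝ)
    (hwork_add : ∀ a b c : ℝ, a ≤ b → b ≤ c → work a c = work a b + work b c)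
    (hserv_add : ∀ a b c : ℝ, a ≤ b → b ≤ c → serv a c = serv a b + serv b c)
    (hrs : r ≤ s 1) (hsf : ∀ q, 1 ≤ q → q ≤ p → s q ≤ f q)
    (hfs : ∀ q, 1 ≤ q → q < p → f q ≤ s (q + 1))
    (hstart : work r (s 1) = serv r (s 1))
    (hgap : ∀ q, 1 ≤ q → q < p → work (f q) (s (q + 1)) = serv (f q) (s (q + 1)))
    (hrun : ∀ q, 1 ≤ q → q ≤ p →
      work (s q) (f q) ≥ serv (s q) (f q) - (m - 1) * len q) :
    work r (f p) ≥ serv r (f p) - (m - 1) * ∑ q ∈ Finset.Icc 1 p, len q := by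
  -- chain: r ≤ f q for all 1 ≤ q ≤ p
  have hrf : ∀ q, 1 ≤ q → q ≤ p → r ≤ f q := by
    intro q h1
    induction q, h1 using Nat.le_induction with
    | base => intro h; exact le_trans hrs (hsf 1 le_rfl h)
    | succ n hn ih =>
      intro h
      have hnp : n < p := lt_of_lt_of_le (Nat.lt_succ_self n) h
      exact le_trans (ih hnp.le) (le_trans (hfs n hn hnp)
        (hsf (n+1) (by omega) h))
  have key : ∀ n, 1 ≤ n → n ≤ p →
      work r (f n) ≥ serv r (f n) - (m - 1) * ∑ q ∈ Finset.Icc 1 n, len q := by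
    intro n h1
    induction n, h1 using Nat.le_induction with
    | base =>
      intro h
      have hsf1 := hsf 1 le_rfl h
      have hw := hwork_add r (s 1) (f 1) hrs hsf1
      have hs := hserv_add r (s 1) (f 1) hrs hsf1
      have := hrun 1 le_rfl h
      simp only [Finset.Icc_self, Finset.sum_singleton]
      rw [hw, hs, hstart]
      linarith
    | succ n hn ih =>
      intro h
      have hnp : n < p := lt_of_lt_of_le (Nat.lt_succ_self n) h
      have h1 : r ≤ f n := hrf n hn hnp.le
      have h2 : f n ≤ s (n+1) := hfs n hn hnp
      have h3 : s (n+1) ≤ f (n+1) := hsf (n+1) (by omega) h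
      have hw1 := hwork_add r (f n) (s (n+1)) h1 h2
      have hw2 := hwork_add r (s (n+1)) (f (n+1)) (h1.trans h2) h3
      have hs1 := hserv_add r (f n) (s (n+1)) h1 h2
      have hs2 := hserv_add r (s (n+1)) (f (n+1)) (h1.trans h2) h3
      have hg := hgap n hn hnp
      have hr := hrun (n+1) (by omega) h
      have hih := ih hnp.le
      rw [Finset.sum_Icc_succ_top (by omega : 1 ≤ n + 1)]
      rw [hw2, hw1, hs2, hs1]
      nlinarith [hlen (n+1)]
  exact key p hp le_rfl
end

section
/- Under the assumptions of the abstract envelope lemma, for any intermediate time t with r ≤ t ≤ f_p: work(r, t) ≥ serv(r, t) − (m−1)·Σ_{q=1}^{p} len(v_q), by splitting [r, t] at the (truncated) envelope points μ^t(q) = min(μ(q), t) where μ = (r, s_1, f_1, …, s_p, f_p), and using that on each sub-interval the corresponding equality or inequality between work and serv holds. -/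
lemma envelope_chain (r : ℝ) (s f : ℕ → ℝ) (p : ℕ) (hrs : r ≤ s 1)
    (hsf : ∀ q, 1 ≤ q → q ≤ p → s q ≤ f q)
    (hfs : ∀ q, 1 ≤ q → q < p → f q ≤ s (q + 1)) :
    ∀ q, 1 ≤ q → q ≤ p → r ≤ f q := by
  intro q hq1 hqp
  induction q with
  | zero => omega
  | succ n ih =>
    rcases Nat.eq_zero_or_pos n with hn | hn
    · subst hn
      exact le_trans hrs (hsf 1 le_rfl hqp)
    · have h1 : r ≤ f n := ih hn (by omega)
      have h2 : f n ≤ s (n + 1) := hfs n hn (by omega)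
      have h3 : s (n + 1) ≤ f (n + 1) := hsf (n + 1) (by omega) hqp
      linarith

lemma envelope_aux (work serv : ℝ → ℝ → ℝ) (m : ℝ) (hm : 1 ≤ m)
    (len : ℕ → ℝ) (hlen : ∀ q, 0 < len q)
    (r : ℝ) (s f : ℕ → ℝ)
    (hwork_add : ∀ a b c : ℝ, a ≤ b → b ≤ c → work a c = work a b + work b c)
    (hserv_add : ∀ a b c : ℝ, a ≤ b → b ≤ c → serv a c = serv a b + serv b c)
    (hrs : r ≤ s 1)
    (hstart : ∀ t', r ≤ t' → t' ≤ s 1 → work r t' = serv r t') :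
    ∀ p, 1 ≤ p →
      (∀ q, 1 ≤ q → q ≤ p → s q ≤ f q) →
      (∀ q, 1 ≤ q → q < p → f q ≤ s (q + 1)) →
      (∀ q, 1 ≤ q → q < p → ∀ t', f q ≤ t' → t' ≤ s (q + 1) →
        work (f q) t' = serv (f q) t') →
      (∀ q, 1 ≤ q → q ≤ p → ∀ t', s q ≤ t' → t' ≤ f q →
        work (s q) t' ≥ serv (s q) t' - (m - 1) * len q) →
      ∀ t : ℝ, r ≤ t → t ≤ f p →
        work r t ≥ serv r t - (m - 1) * ∑ q ∈ Finset.Icc 1 p, len q := by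
  intro p hp
  induction p, hp using Nat.le_induction with
  | base =>
    intro hsf hfs hgap hrun t hrt htf
    have hsum : ∑ q ∈ Finset.Icc 1 1, len q = len 1 := by simp
    rw [hsum]
    rcases le_total t (s 1) with h | h
    · rw [hstart t hrt h]
      have : 0 ≤ (m - 1) * len 1 := mul_nonneg (by linarith) (hlen 1).le
      linarith
    · have hw := hwork_add r (s 1) t hrs h
      have hs := hserv_add r (s 1) t hrs h
      have h1 := hstart (s 1) hrs le_rfl
      have h2 := hrun 1 le_rfl le_rfl t h htf
      linarith
  | succ p hp ih =>
    intro hsf hfs hgap hrun t hrt htf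
    have ih' := ih (fun q h1 h2 => hsf q h1 (by omega))
      (fun q h1 h2 => hfs q h1 (by omega))
      (fun q h1 h2 => hgap q h1 (by omega))
      (fun q h1 h2 => hrun q h1 (by omega))
    have hrfp : r ≤ f p :=
      envelope_chain r s f (p + 1) hrs hsf hfs p hp (by omega)
    have hsum : ∑ q ∈ Finset.Icc 1 (p + 1), len q
        = (∑ q ∈ Finset.Icc 1 p, len q) + len (p + 1) :=
      Finset.sum_Icc_succ_top (by omega) len
    have hnn : 0 ≤ (m - 1) * len (p + 1) :=
      mul_nonneg (by linarith) (hlen (p + 1)).le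
    rcases le_total t (f p) with h | h
    · have := ih' t hrt h
      rw [hsum]
      linarith
    · have hfps : f p ≤ s (p + 1) := hfs p hp (by omega)
      have hihfp := ih' (f p) hrfp le_rfl
      rcases le_total t (s (p + 1)) with h2 | h2
      · have hw := hwork_add r (f p) t hrfp h
        have hs := hserv_add r (f p) t hrfp h
        have hg := hgap p hp (by omega) t h h2
        rw [hsum]
        linarith
      · have hw := hwork_add r (f p) t hrfp h
        have hs := hserv_add r (f p) t hrfp h
        have hstp : f p ≤ t := h
        have hw2 := hwork_add (f p) (s (p + 1)) t hfps h2
        have hs2 := hserv_add (f p) (s (p + 1)) t hfps h2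
        have hg := hgap p hp (by omega) (s (p + 1)) hfps le_rfl
        have hr := hrun (p + 1) (by omega) le_rfl t h2 htf
        rw [hsum]
        linarith

/-- Extended abstract envelope lemma: under interval additivity, equality of
`work` and `serv` on (truncated) gap intervals, and the envelope inequality on
(truncated) subjob intervals, for every intermediate time `r ≤ t ≤ f p` we have
`work(r, t) ≥ serv(r, t) − (m−1)·Σ_{q=1}^{p} len q`. -/
theorem abstract_envelope_lemma_extended (work serv : ℝ → ℝ → ℝ) (m : ℝ) (hm : 1 ≤ m)
    (len : ℕ → ℝ) (hlen : ∀ q, 0 < len q)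
    (r : ℝ) (p : ℕ) (hp : 1 ≤ p) (s f : ℕ → ℝ)
    (hwork_add : ∀ a b c : ℝ, a ≤ b → b ≤ c → work a c = work a b + work b c)
    (hserv_add : ∀ a b c : ℝ, a ≤ b → b ≤ c → serv a c = serv a b + serv b c)
    (hserv_nonneg : ∀ a b : ℝ, a ≤ b → 0 ≤ serv a b)
    (hwork_nonneg : ∀ a b : ℝ, a ≤ b → 0 ≤ work a b)
    (hrs : r ≤ s 1) (hsf : ∀ q, 1 ≤ q → q ≤ p → s q ≤ f q)
    (hfs : ∀ q, 1 ≤ q → q < p → f q ≤ s (q + 1))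
    (hstart : ∀ t', r ≤ t' → t' ≤ s 1 → work r t' = serv r t')
    (hgap : ∀ q, 1 ≤ q → q < p → ∀ t', f q ≤ t' → t' ≤ s (q + 1) →
      work (f q) t' = serv (f q) t')
    (hrun : ∀ q, 1 ≤ q → q ≤ p → ∀ t', s q ≤ t' → t' ≤ f q →
      work (s q) t' ≥ serv (s q) t' - (m - 1) * len q) :
    ∀ t : ℝ, r ≤ t → t ≤ f p →
      work r t ≥ serv r t - (m - 1) * ∑ q ∈ Finset.Icc 1 p, len q :=
  envelope_aux work serv m hm len hlen r s f hwork_add hserv_add hrs hstart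
    p hp hsf hfs hgap hrun
end
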